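/- Fix T > 0 and K > T/2 + 1. The model Cauchy problem admits at least two distinct weak solutions: there exist bounded measurable u¹, u² : [0,T] × ℝ → ℝ, both weak solutions of the model Cauchy problem, such that the set {(t,x) ∈ (0,T) × ℝ : u¹(t,x) ≠ u²(t,x)} has positive Lebesgue measure. (One may take u¹(t,x) = 1_{0 ≤ x ≤ (t/2+1)²} and u²(t,x) = 1_{−(t/2)² ≤ x ≤ (t/2+1)²}, which differ on the set {(t,x) : 0 < t ≤ T, −(t/2)² ≤ x < 0} of positive measure.) -/

import Mathlib

open MeasureTheory Set

/-- `u` is a weak solution of the model Cauchy problem for the scalar conservation law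
`∂ₜu + 2 sgn(x) min(√|x|, K) u ∂ₓu = 0` on `(0,T) × ℝ` with initial datum `1_{[0,1]}`. -/
def IsWeakSolutionModel (T K : ℝ) (u : ℝ → ℝ → ℝ) : Prop :=
  ∀ φ : ℝ × ℝ → ℝ, ContDiff ℝ (⊤ : ℕ∞) φ → HasCompactSupport φ → (∀ x : ℝ, φ (T, x) = 0) →
    (∫ t in Ioc (0 : ℝ) T, ∫ x : ℝ,
        (u t x * deriv (fun s : ℝ => φ (s, x)) t
          + Real.sign x * min (Real.sqrt |x|) K * (u t x) ^ 2 * deriv (fun y : ℝ => φ (t, y)) x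
          + (u t x) ^ 2 * (2 * Real.sqrt |x|)⁻¹ *
              (Ioo (0 : ℝ) (K ^ 2)).indicator (fun _ => (1 : ℝ)) |x| * φ (t, x)))
      + (∫ x : ℝ, (Icc (0 : ℝ) 1).indicator (fun _ => (1 : ℝ)) x * φ (0, x)) = 0

noncomputable def P1 (φ : ℝ × ℝ → ℝ) (p : ℝ × ℝ) : ℝ := fderiv ℝ φ p (1, 0)
noncomputable def P2 (φ : ℝ × ℝ → ℝ) (p : ℝ × ℝ) : ℝ := fderiv ℝ φ p (0, 1)

lemma hasDerivAt_comp_phi {φ : ℝ × ℝ → ℝ} (hφ : ContDiff ℝ (⊤ : ℕ∞) φ) {f g : ℝ → ℝ} {f' g' t : ℝ}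
    (hf : HasDerivAt f f' t) (hg : HasDerivAt g g' t) :
    HasDerivAt (fun s => φ (f s, g s)) (f' * P1 φ (f t, g t) + g' * P2 φ (f t, g t)) t := by
  have h := ((hφ.differentiable (by simp) (f t, g t)).hasFDerivAt).comp_hasDerivAt t (hf.prodMk hg)
  refine h.congr_deriv ?_
  have hv : ((f', g') : ℝ × ℝ) = f' • ((1:ℝ), (0:ℝ)) + g' • ((0:ℝ), (1:ℝ)) := by
    simp [Prod.ext_iff]
  rw [hv, map_add, _root_.map_smul, _root_.map_smul]
  simp only [P1, P2, smul_eq_mul]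

lemma deriv_fst {φ : ℝ × ℝ → ℝ} (hφ : ContDiff ℝ (⊤ : ℕ∞) φ) (t x : ℝ) :
    deriv (fun s : ℝ => φ (s, x)) t = P1 φ (t, x) := by
  have := hasDerivAt_comp_phi hφ (hasDerivAt_id t) (hasDerivAt_const t x)
  simpa using this.deriv

lemma deriv_snd {φ : ℝ × ℝ → ℝ} (hφ : ContDiff ℝ (⊤ : ℕ∞) φ) (t x : ℝ) :
    deriv (fun y : ℝ => φ (t, y)) x = P2 φ (t, x) := by
  have := hasDerivAt_comp_phi hφ (hasDerivAt_const x t) (hasDerivAt_id x)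
  simpa using this.deriv

lemma contP1 {φ : ℝ × ℝ → ℝ} (hφ : ContDiff ℝ (⊤ : ℕ∞) φ) : Continuous (P1 φ) :=
  (hφ.continuous_fderiv (by simp)).clm_apply continuous_const

lemma contP2 {φ : ℝ × ℝ → ℝ} (hφ : ContDiff ℝ (⊤ : ℕ∞) φ) : Continuous (P2 φ) :=
  (hφ.continuous_fderiv (by simp)).clm_apply continuous_const

lemma boundP2 {φ : ℝ × ℝ → ℝ} (hφ : ContDiff ℝ (⊤ : ℕ∞) φ) (hs : HasCompactSupport φ) :
    ∃ C, ∀ p, |P2 φ p| ≤ C := by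
  have h1 : HasCompactSupport (P2 φ) := by
    have := (hs.fderiv ℝ)
    exact this.comp_left (g := fun L : ℝ × ℝ →L[ℝ] ℝ => L (0,1)) (by simp)
  obtain ⟨C, hC⟩ := h1.exists_bound_of_continuous (contP2 hφ)
  exact ⟨C, fun p => by simpa using hC p⟩

lemma boundPhi {φ : ℝ × ℝ → ℝ} (hφ : ContDiff ℝ (⊤ : ℕ∞) φ) (hs : HasCompactSupport φ) :
    ∃ C, 0 ≤ C ∧ ∀ p, |φ p| ≤ C := by
  obtain ⟨C, hC⟩ := hs.exists_bound_of_continuous hφ.continuous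
  exact ⟨C, le_trans (abs_nonneg _) (by simpa using hC 0), fun p => by simpa using hC p⟩

-- integrability of 1/sqrt|x|
lemma II_inv_sqrt (c d : ℝ) : IntervalIntegrable (fun x => (Real.sqrt |x|)⁻¹) volume c d := by
  suffices H : ∀ d : ℝ, 0 ≤ d → IntervalIntegrable (fun x => (Real.sqrt |x|)⁻¹) volume 0 d by
    have Hall : ∀ d : ℝ, IntervalIntegrable (fun x => (Real.sqrt |x|)⁻¹) volume 0 d := by
      intro d
      rcases le_or_gt 0 d with h | h
      · exact H d h
      · have := (IntervalIntegrable.iff_comp_neg).mp (H (-d) (by linarith))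
        exact (by simpa [abs_neg] using this : IntervalIntegrable (fun x => (Real.sqrt |x|)⁻¹) volume 0 d)
    exact (Hall c).symm.trans (Hall d)
  intro d hd
  have hrpow : IntervalIntegrable (fun x : ℝ => x ^ (-(1/2) : ℝ)) volume 0 d :=
    intervalIntegral.intervalIntegrable_rpow' (by norm_num)
  rw [intervalIntegrable_iff_integrableOn_Ioc_of_le hd] at hrpow ⊢
  apply hrpow.congr_fun _ measurableSet_Ioc
  intro x hx
  simp [abs_of_pos hx.1, Real.sqrt_eq_rpow, ← Real.rpow_neg hx.1.le]

lemma measurable_realSign : Measurable Real.sign := by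
  have : Real.sign = fun r : ℝ => if r < 0 then (-1:ℝ) else if 0 < r then 1 else 0 := by
    funext r; rfl
  rw [this]
  exact Measurable.ite (measurableSet_lt measurable_id measurable_const) measurable_const
    (Measurable.ite (measurableSet_lt measurable_const measurable_id) measurable_const
      measurable_const)

lemma abs_realSign (x : ℝ) : |Real.sign x| ≤ 1 := by
  rcases Real.sign_apply_eq x with h | h | h <;> rw [h] <;> norm_num

noncomputable def hp (φ : ℝ × ℝ → ℝ) (K t : ℝ) (x : ℝ) : ℝ :=
  Real.sign x * min (Real.sqrt |x|) K * P2 φ (t, x)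
    + (2 * Real.sqrt |x|)⁻¹ * (Ioo (0:ℝ) (K^2)).indicator (fun _ => (1:ℝ)) |x| * φ (t, x)

lemma II_hp {φ : ℝ × ℝ → ℝ} (hφ : ContDiff ℝ (⊤ : ℕ∞) φ) (hsupp : HasCompactSupport φ)
    {K : ℝ} (hK0 : 0 ≤ K) (t c d : ℝ) : IntervalIntegrable (hp φ K t) volume c d := by
  obtain ⟨C2, hC2⟩ := boundP2 hφ hsupp
  obtain ⟨Cφ, hCφ0, hCφ⟩ := boundPhi hφ hsupp
  have hmeas : Measurable (hp φ K t) := by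
    have h1 : Measurable fun x : ℝ => Real.sign x * min (Real.sqrt |x|) K * P2 φ (t, x) :=
      ((measurable_realSign.mul ((Real.continuous_sqrt.comp continuous_abs).measurable.min
        measurable_const)).mul ((contP2 hφ).measurable.comp (by fun_prop)))
    have h2 : Measurable fun x : ℝ =>
        (2 * Real.sqrt |x|)⁻¹ * (Ioo (0:ℝ) (K^2)).indicator (fun _ => (1:ℝ)) |x| * φ (t, x) := by
      apply Measurable.mul
      apply Measurable.mul
      · exact ((measurable_const.mul ((Real.continuous_sqrt.comp continuous_abs).measurable))).inv
      · exact (Measurable.indicator measurable_const measurableSet_Ioo).comp continuous_abs.measurable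
      · exact hφ.continuous.measurable.comp (by fun_prop)
    exact h1.add h2
  have hC2' : 0 ≤ C2 := le_trans (abs_nonneg _) (hC2 (0,0))
  -- dominating function
  have hdom : IntervalIntegrable (fun x => K * C2 + (Real.sqrt |x|)⁻¹ * Cφ) volume c d :=
    (intervalIntegrable_const).add ((II_inv_sqrt c d).mul_const _)
  apply hdom.mono_fun hmeas.aestronglyMeasurable
  filter_upwards with x
  have hb1 : |Real.sign x * min (Real.sqrt |x|) K * P2 φ (t, x)| ≤ K * C2 := by
    rw [abs_mul, abs_mul]
    have h0 : (0:ℝ) ≤ min (Real.sqrt |x|) K := le_min (Real.sqrt_nonneg _) hK0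
    have : |min (Real.sqrt |x|) K| ≤ K := by rw [abs_of_nonneg h0]; exact min_le_right _ _
    calc |Real.sign x| * |min (Real.sqrt |x|) K| * |P2 φ (t, x)| ≤ 1 * K * C2 := by
          gcongr; exacts [abs_realSign x, hC2 _]
      _ = K * C2 := by ring
  have hb2 : |(2 * Real.sqrt |x|)⁻¹ * (Ioo (0:ℝ) (K^2)).indicator (fun _ => (1:ℝ)) |x| * φ (t, x)|
      ≤ (Real.sqrt |x|)⁻¹ * Cφ := by
    rw [abs_mul, abs_mul]
    have hind : abs ((Ioo (0:ℝ) (K^2)).indicator (fun _ => (1:ℝ)) (abs x)) ≤ 1 := by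
      rw [Set.indicator_apply]; split <;> norm_num
    have hinv : |(2 * Real.sqrt |x|)⁻¹| ≤ (Real.sqrt |x|)⁻¹ := by
      rw [abs_of_nonneg (by positivity)]
      rcases eq_or_ne (Real.sqrt |x|) 0 with h | h
      · simp [h]
      · have hpos : 0 < Real.sqrt |x| := lt_of_le_of_ne (Real.sqrt_nonneg _) (Ne.symm h)
        apply inv_anti₀ hpos; linarith
    calc abs ((2 * Real.sqrt |x|)⁻¹) * abs ((Ioo (0:ℝ) (K^2)).indicator (fun _ => (1:ℝ)) (abs x))
          * abs (φ (t, x))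
        ≤ (Real.sqrt |x|)⁻¹ * 1 * Cφ :=
          mul_le_mul (mul_le_mul hinv hind (abs_nonneg _) (by positivity)) (hCφ _)
            (abs_nonneg _) (by positivity)
      _ = (Real.sqrt |x|)⁻¹ * Cφ := by ring
  have := abs_add_le (Real.sign x * min (Real.sqrt |x|) K * P2 φ (t, x))
    ((2 * Real.sqrt |x|)⁻¹ * (Ioo (0:ℝ) (K^2)).indicator (fun _ => (1:ℝ)) |x| * φ (t, x))
  simp only [hp, Real.norm_eq_abs]
  rw [abs_of_nonneg (by positivity : (0:ℝ) ≤ K * C2 + (Real.sqrt |x|)⁻¹ * Cφ)]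
  calc |_| ≤ _ := this
    _ ≤ K * C2 + (Real.sqrt |x|)⁻¹ * Cφ := add_le_add hb1 hb2
  

lemma inner_ftc {φ : ℝ × ℝ → ℝ} (hφ : ContDiff ℝ (⊤ : ℕ∞) φ) (hsupp : HasCompactSupport φ)
    {K : ℝ} (hK0 : 0 ≤ K) (t A B : ℝ) (hA : A ≤ 0) (hB : 0 ≤ B)
    (hAK : -A ≤ K^2) (hBK : B ≤ K^2) :
    ∫ x in A..B, hp φ K t x = Real.sqrt B * φ (t, B) + Real.sqrt (-A) * φ (t, A) := by
  set H : ℝ → ℝ := fun x => Real.sign x * Real.sqrt |x| * φ (t, x) with hH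
  have hHb : ∀ x : ℝ, 0 ≤ x → H x = Real.sqrt x * φ (t, x) := by
    intro x hx
    rcases eq_or_lt_of_le hx with h | h
    · simp [hH, ← h, Real.sign_zero]
    · simp [hH, Real.sign_of_pos h, abs_of_pos h]
  have hHa : ∀ x : ℝ, x ≤ 0 → H x = -(Real.sqrt (-x) * φ (t, x)) := by
    intro x hx
    rcases eq_or_lt_of_le hx with h | h
    · simp [hH, h, Real.sign_zero]
    · simp [hH, Real.sign_of_neg h, abs_of_neg h]
  have hphi : ∀ x : ℝ, HasDerivAt (fun y => φ (t, y)) (P2 φ (t, x)) x := by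
    intro x
    have := hasDerivAt_comp_phi hφ (hasDerivAt_const x t) (hasDerivAt_id x)
    simpa using this
  have hR : ∫ x in (0:ℝ)..B, hp φ K t x = H B - H 0 := by
    apply intervalIntegral.integral_eq_sub_of_hasDeriv_right_of_le hB
    · apply ContinuousOn.congr
        ((Real.continuous_sqrt.mul (hφ.continuous.comp (Continuous.prodMk_right t))).continuousOn
          (s := Icc 0 B))
      intro x hx; exact hHb x hx.1
    · intro x hx
      have hx0 : 0 < x := hx.1
      have hder : HasDerivAt (fun y => Real.sqrt y * φ (t, y))
          ((2 * Real.sqrt x)⁻¹ * φ (t, x) + Real.sqrt x * P2 φ (t, x)) x := by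
        have := (Real.hasDerivAt_sqrt hx0.ne').mul (hphi x)
        exact this.congr_deriv (by rw [one_div])
      have heq : H =ᶠ[nhds x] fun y => Real.sqrt y * φ (t, y) := by
        filter_upwards [IsOpen.eventually_mem isOpen_Ioi hx0] with y hy
        exact hHb y (le_of_lt hy)
      have hder' : HasDerivAt H ((2 * Real.sqrt x)⁻¹ * φ (t, x) + Real.sqrt x * P2 φ (t, x)) x :=
        hder.congr_of_eventuallyEq heq
      have hval : hp φ K t x = (2 * Real.sqrt x)⁻¹ * φ (t, x) + Real.sqrt x * P2 φ (t, x) := by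
        have hsx : Real.sqrt x ≤ K := by
          have : Real.sqrt x ≤ Real.sqrt (K^2) := Real.sqrt_le_sqrt (le_trans hx.2.le hBK)
          rwa [Real.sqrt_sq hK0] at this
        have hmem : |x| ∈ Ioo (0:ℝ) (K^2) := by
          rw [abs_of_pos hx0]; exact ⟨hx0, lt_of_lt_of_le hx.2 hBK⟩
        rw [hp, Real.sign_of_pos hx0, abs_of_pos hx0, min_eq_left hsx,
          Set.indicator_of_mem (by rwa [abs_of_pos hx0] at hmem)]
        ring
      rw [hval]
      exact hder'.hasDerivWithinAt
    · exact II_hp hφ hsupp hK0 t 0 B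
  have hL : ∫ x in A..(0:ℝ), hp φ K t x = H 0 - H A := by
    apply intervalIntegral.integral_eq_sub_of_hasDeriv_right_of_le hA
    · apply ContinuousOn.congr (f := fun x => -(Real.sqrt (-x) * φ (t, x)))
        (((Real.continuous_sqrt.comp continuous_neg).mul
          (hφ.continuous.comp (Continuous.prodMk_right t))).neg.continuousOn (s := Icc A 0))
      intro x hx; exact hHa x hx.2
    · intro x hx
      have hx0 : x < 0 := hx.2
      have hsq : HasDerivAt (fun y : ℝ => Real.sqrt (-y)) (-(2 * Real.sqrt (-x))⁻¹) x := by
        have h1 : HasDerivAt (fun y : ℝ => -y) (-1) x := by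
          exact (hasDerivAt_id x).neg
        have := (Real.hasDerivAt_sqrt (by linarith : -x ≠ 0)).comp x h1
        refine this.congr_deriv ?_
        simp [one_div]
      have hder : HasDerivAt (fun y => -(Real.sqrt (-y) * φ (t, y)))
          ((2 * Real.sqrt (-x))⁻¹ * φ (t, x) - Real.sqrt (-x) * P2 φ (t, x)) x := by
        have := (hsq.mul (hphi x)).neg
        refine this.congr_deriv ?_
        ring
      have heq : H =ᶠ[nhds x] fun y => -(Real.sqrt (-y) * φ (t, y)) := by
        filter_upwards [IsOpen.eventually_mem isOpen_Iio hx0] with y hy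
        exact hHa y (le_of_lt hy)
      have hder' : HasDerivAt H
          ((2 * Real.sqrt (-x))⁻¹ * φ (t, x) - Real.sqrt (-x) * P2 φ (t, x)) x :=
        hder.congr_of_eventuallyEq heq
      have hval : hp φ K t x
          = (2 * Real.sqrt (-x))⁻¹ * φ (t, x) - Real.sqrt (-x) * P2 φ (t, x) := by
        have hsx : Real.sqrt (-x) ≤ K := by
          have : Real.sqrt (-x) ≤ Real.sqrt (K^2) := Real.sqrt_le_sqrt (by linarith [hx.1])
          rwa [Real.sqrt_sq hK0] at this
        have hmem : |x| ∈ Ioo (0:ℝ) (K^2) := by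
          rw [abs_of_neg hx0]
          exact ⟨by linarith, by linarith [hx.1]⟩
        rw [hp, Real.sign_of_neg hx0, abs_of_neg hx0, min_eq_left hsx,
          Set.indicator_of_mem (by rwa [abs_of_neg hx0] at hmem)]
        ring
      rw [hval]
      exact hder'.hasDerivWithinAt
    · exact II_hp hφ hsupp hK0 t A 0
  have hsplit := intervalIntegral.integral_add_adjacent_intervals
    (II_hp hφ hsupp hK0 t A 0) (II_hp hφ hsupp hK0 t 0 B)
  rw [← hsplit, hL, hR, hHb B hB, hHa A hA]
  have h0 : H 0 = 0 := by simp [hH, Real.sign_zero]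
  rw [h0]; ring

lemma subst_integral {g : ℝ → ℝ} (hg : Continuous g) (c : ℝ) :
    ∫ x in (0:ℝ)..c, g x = ∫ y in (0:ℝ)..(1:ℝ), c * g (c * y) := by
  have h := intervalIntegral.integral_comp_smul_deriv (a := (0:ℝ)) (b := (1:ℝ))
      (f := fun y => c * y) (f' := fun _ => c) (g := g)
      (fun y _ => by simpa using ((hasDerivAt_id y).const_mul c)) continuousOn_const hg
  simp only [smul_eq_mul, Function.comp, mul_zero, mul_one] at h
  rw [← h]

/-- the time derivative of the substituted integrand -/
noncomputable def DD (φ : ℝ × ℝ → ℝ) (a b a' b' : ℝ → ℝ) (s y : ℝ) : ℝ :=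
  (b' s * φ (s, b s * y) + b s * (P1 φ (s, b s * y) + (b' s * y) * P2 φ (s, b s * y)))
    - (a' s * φ (s, a s * y) + a s * (P1 φ (s, a s * y) + (a' s * y) * P2 φ (s, a s * y)))

lemma psi_hasDeriv {φ : ℝ × ℝ → ℝ} (hφ : ContDiff ℝ (⊤ : ℕ∞) φ) {a b a' b' : ℝ → ℝ}
    (ha : ∀ t, HasDerivAt a (a' t) t) (hb : ∀ t, HasDerivAt b (b' t) t) (s y : ℝ) :
    HasDerivAt (fun s => b s * φ (s, b s * y) - a s * φ (s, a s * y))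
      (DD φ a b a' b' s y) s := by
  have h1 : HasDerivAt (fun s => φ (s, b s * y))
      (1 * P1 φ (s, b s * y) + (b' s * y) * P2 φ (s, b s * y)) s :=
    hasDerivAt_comp_phi hφ (hasDerivAt_id s) ((hb s).mul_const y)
  have h2 : HasDerivAt (fun s => φ (s, a s * y))
      (1 * P1 φ (s, a s * y) + (a' s * y) * P2 φ (s, a s * y)) s :=
    hasDerivAt_comp_phi hφ (hasDerivAt_id s) ((ha s).mul_const y)
  have h := ((hb s).mul h1).sub ((ha s).mul h2)
  refine h.congr_deriv ?_
  simp only [DD]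
  ring

lemma contDD {φ : ℝ × ℝ → ℝ} (hφ : ContDiff ℝ (⊤ : ℕ∞) φ) {a b a' b' : ℝ → ℝ}
    (ha : Continuous a) (hb : Continuous b) (ha'c : Continuous a') (hb'c : Continuous b') :
    Continuous (fun p : ℝ × ℝ => DD φ a b a' b' p.1 p.2) := by
  have hφc : Continuous φ := hφ.continuous
  have h1 := contP1 hφ
  have h2 := contP2 hφ
  unfold DD
  fun_prop

lemma param_deriv {φ : ℝ × ℝ → ℝ} (hφ : ContDiff ℝ (⊤ : ℕ∞) φ) {a b a' b' : ℝ → ℝ}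
    (ha : ∀ t, HasDerivAt a (a' t) t) (hb : ∀ t, HasDerivAt b (b' t) t)
    (ha'c : Continuous a') (hb'c : Continuous b') (t₀ : ℝ) :
    HasDerivAt (fun t => ∫ y in (0:ℝ)..(1:ℝ), (b t * φ (t, b t * y) - a t * φ (t, a t * y)))
      (∫ y in (0:ℝ)..(1:ℝ), DD φ a b a' b' t₀ y) t₀ := by
  have hac : Continuous a := continuous_iff_continuousAt.mpr fun t => (ha t).continuousAt
  have hbc : Continuous b := continuous_iff_continuousAt.mpr fun t => (hb t).continuousAt
  have hDDc := contDD hφ hac hbc ha'c hb'c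
  have hψc : Continuous (fun p : ℝ × ℝ => b p.1 * φ (p.1, b p.1 * p.2)
      - a p.1 * φ (p.1, a p.1 * p.2)) := by
    have hφc : Continuous φ := hφ.continuous
    fun_prop
  -- bound on compact set
  obtain ⟨C, hC⟩ := (((isCompact_Icc (a := t₀ - 1) (b := t₀ + 1)).prod
    (isCompact_Icc (a := (0:ℝ)) (b := 1)))).exists_bound_of_continuousOn hDDc.continuousOn
  have main := (intervalIntegral.hasDerivAt_integral_of_dominated_loc_of_deriv_le
    (F := fun t y => b t * φ (t, b t * y) - a t * φ (t, a t * y))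
    (F' := fun t y => DD φ a b a' b' t y) (x₀ := t₀) (a := (0:ℝ)) (b := (1:ℝ))
    (bound := fun _ => C) (s := Metric.ball t₀ 1) (Metric.ball_mem_nhds t₀ one_pos)
    (Filter.Eventually.of_forall fun t =>
      ((hψc.comp (Continuous.prodMk_right t)).aestronglyMeasurable))
    (Continuous.intervalIntegrable (μ := volume) (hψc.comp (Continuous.prodMk_right t₀)) 0 1)
    ((hDDc.comp (Continuous.prodMk_right t₀)).aestronglyMeasurable)
    ?_ intervalIntegrable_const ?_)
  · exact main.2
  · filter_upwards with y hy t ht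
    have hmem : (t, y) ∈ Icc (t₀ - 1) (t₀ + 1) ×ˢ Icc (0:ℝ) 1 := by
      constructor
      · have := mem_ball_iff_norm.mp ht
        rw [Real.norm_eq_abs, abs_sub_lt_iff] at this
        exact ⟨by linarith [this.1, this.2], by linarith [this.1, this.2]⟩
      · rcases le_or_gt 0 1 with _ | _
        · exact ⟨le_of_lt (by simpa using hy.1 : (0:ℝ) < y), by simpa using hy.2⟩
        · linarith
    simpa using hC _ hmem
  · filter_upwards with y hy t ht
    exact psi_hasDeriv hφ ha hb t y

lemma isWeakSol_indicator (T K : ℝ) (hT : 0 < T) (hK0 : 0 ≤ K)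
    (a b a' b' : ℝ → ℝ)
    (ha : ∀ t, HasDerivAt a (a' t) t) (hb : ∀ t, HasDerivAt b (b' t) t)
    (ha'c : Continuous a') (hb'c : Continuous b')
    (ha0 : a 0 = 0) (hb0 : b 0 = 1)
    (hrel : ∀ t ∈ Icc (0:ℝ) T, a' t = -Real.sqrt (-(a t)) ∧ b' t = Real.sqrt (b t) ∧
      a t ≤ 0 ∧ 0 ≤ b t ∧ -(a t) ≤ K^2 ∧ b t ≤ K^2) :
    IsWeakSolutionModel T K (fun t x => if x ∈ Icc (a t) (b t) then 1 else 0) := by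
  intro φ hφ hsupp hφT
  have hac : Continuous a := continuous_iff_continuousAt.mpr fun t => (ha t).continuousAt
  have hbc : Continuous b := continuous_iff_continuousAt.mpr fun t => (hb t).continuousAt
  have hφc : Continuous φ := hφ.continuous
  have hP1 := contP1 hφ
  have hP2 := contP2 hφ
  -- the inner-integral value
  set I : ℝ → ℝ := fun t => ((∫ x in (0:ℝ)..(b t), P1 φ (t, x)) - ∫ x in (0:ℝ)..(a t), P1 φ (t, x))
      + Real.sqrt (b t) * φ (t, b t) + Real.sqrt (-(a t)) * φ (t, a t) with hI
  -- Step 1: pointwise integrand identification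
  have hstep1 : ∀ t : ℝ, (fun x : ℝ =>
      ((if x ∈ Icc (a t) (b t) then (1:ℝ) else 0) * deriv (fun s : ℝ => φ (s, x)) t
        + Real.sign x * min (Real.sqrt |x|) K *
            (if x ∈ Icc (a t) (b t) then (1:ℝ) else 0) ^ 2 * deriv (fun y : ℝ => φ (t, y)) x
        + (if x ∈ Icc (a t) (b t) then (1:ℝ) else 0) ^ 2 * (2 * Real.sqrt |x|)⁻¹ *
            (Ioo (0 : ℝ) (K ^ 2)).indicator (fun _ => (1 : ℝ)) |x| * φ (t, x)))
      = (Icc (a t) (b t)).indicator (fun x => P1 φ (t, x) + hp φ K t x) := by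
    intro t; funext x
    rw [deriv_fst hφ, deriv_snd hφ]
    by_cases hx : x ∈ Icc (a t) (b t)
    · simp only [if_pos hx, Set.indicator_of_mem hx, hp, one_pow, one_mul]
      ring
    · have hx' : ¬(a t ≤ x ∧ x ≤ b t) := by rwa [mem_Icc] at hx
      simp [hx', Set.indicator_of_notMem hx]
  -- Step 2: inner integral equals I t for t ∈ [0,T]
  have hstep2 : ∀ t ∈ Icc (0:ℝ) T, (∫ x : ℝ,
      ((if x ∈ Icc (a t) (b t) then (1:ℝ) else 0) * deriv (fun s : ℝ => φ (s, x)) t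
        + Real.sign x * min (Real.sqrt |x|) K *
            (if x ∈ Icc (a t) (b t) then (1:ℝ) else 0) ^ 2 * deriv (fun y : ℝ => φ (t, y)) x
        + (if x ∈ Icc (a t) (b t) then (1:ℝ) else 0) ^ 2 * (2 * Real.sqrt |x|)⁻¹ *
            (Ioo (0 : ℝ) (K ^ 2)).indicator (fun _ => (1 : ℝ)) |x| * φ (t, x))) = I t := by
    intro t ht
    obtain ⟨hra, hrb, ha0t, hb0t, haK, hbK⟩ := hrel t ht
    have hab : a t ≤ b t := le_trans ha0t hb0t
    rw [hstep1 t, integral_indicator measurableSet_Icc, integral_Icc_eq_integral_Ioc,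
      ← intervalIntegral.integral_of_le hab]
    have hP1i : ∀ c d : ℝ, IntervalIntegrable (fun x => P1 φ (t, x)) volume c d :=
      fun c d => Continuous.intervalIntegrable (hP1.comp (Continuous.prodMk_right t)) c d
    rw [intervalIntegral.integral_add (hP1i _ _) (II_hp hφ hsupp hK0 t _ _),
      inner_ftc hφ hsupp hK0 t (a t) (b t) ha0t hb0t haK hbK]
    have hsplit : (∫ x in (a t)..(0:ℝ), P1 φ (t, x)) + ∫ x in (0:ℝ)..(b t), P1 φ (t, x)
        = ∫ x in (a t)..(b t), P1 φ (t, x) :=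
      intervalIntegral.integral_add_adjacent_intervals (hP1i _ _) (hP1i _ _)
    rw [hI]
    rw [← hsplit, intervalIntegral.integral_symm]
    ring
  -- the primitive F
  set F : ℝ → ℝ := fun t => ∫ y in (0:ℝ)..(1:ℝ), (b t * φ (t, b t * y) - a t * φ (t, a t * y))
    with hF
  have hψc : Continuous (fun p : ℝ × ℝ => b p.1 * φ (p.1, b p.1 * p.2)
      - a p.1 * φ (p.1, a p.1 * p.2)) := by fun_prop
  have hFval : ∀ t : ℝ, F t = ∫ x in (a t)..(b t), φ (t, x) := by
    intro t
    have hg : Continuous fun x => φ (t, x) := by fun_prop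
    have h1 : ∫ x in (0:ℝ)..(b t), φ (t, x)
        = ∫ y in (0:ℝ)..(1:ℝ), b t * φ (t, b t * y) := subst_integral hg (b t)
    have h2 : ∫ x in (0:ℝ)..(a t), φ (t, x)
        = ∫ y in (0:ℝ)..(1:ℝ), a t * φ (t, a t * y) := subst_integral hg (a t)
    have hsplit : (∫ x in (a t)..(0:ℝ), φ (t, x)) + ∫ x in (0:ℝ)..(b t), φ (t, x)
        = ∫ x in (a t)..(b t), φ (t, x) :=
      intervalIntegral.integral_add_adjacent_intervals
        (hg.intervalIntegrable _ _) (hg.intervalIntegrable _ _)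
    have i1 : IntervalIntegrable (fun y => b t * φ (t, b t * y)) volume 0 1 :=
      Continuous.intervalIntegrable (by fun_prop) _ _
    have i2 : IntervalIntegrable (fun y => a t * φ (t, a t * y)) volume 0 1 :=
      Continuous.intervalIntegrable (by fun_prop) _ _
    have hsub' : F t = (∫ y in (0:ℝ)..(1:ℝ), b t * φ (t, b t * y))
        - ∫ y in (0:ℝ)..(1:ℝ), a t * φ (t, a t * y) := intervalIntegral.integral_sub i1 i2
    rw [hsub', ← h1, ← h2, ← hsplit,
      intervalIntegral.integral_symm (a := (0:ℝ)) (b := a t)]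
    ring
  -- continuity of F
  have hFcont : Continuous F :=
    intervalIntegral.continuous_parametric_intervalIntegral_of_continuous'
      (f := fun t y => b t * φ (t, b t * y) - a t * φ (t, a t * y)) hψc 0 1
  -- derivative of F
  have hFderiv : ∀ t ∈ Ioo (0:ℝ) T, HasDerivAt F (I t) t := by
    intro t ht
    obtain ⟨hra, hrb, ha0t, hb0t, haK, hbK⟩ := hrel t ⟨ht.1.le, ht.2.le⟩
    have h := param_deriv hφ ha hb ha'c hb'c t
    have hval : ∫ y in (0:ℝ)..(1:ℝ), DD φ a b a' b' t y = I t := by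
      have hDD : ∀ y : ℝ, DD φ a b a' b' t y
          = (b t * P1 φ (t, b t * y) - a t * P1 φ (t, a t * y))
            + b' t * (φ (t, b t * y) + b t * y * P2 φ (t, b t * y))
            - a' t * (φ (t, a t * y) + a t * y * P2 φ (t, a t * y)) := by
        intro y; simp only [DD]; ring
      have hc1 : Continuous fun y : ℝ => b t * P1 φ (t, b t * y) - a t * P1 φ (t, a t * y) := by
        fun_prop
      have hc2 : Continuous fun y : ℝ => φ (t, b t * y) + b t * y * P2 φ (t, b t * y) := by
        fun_prop
      have hc3 : Continuous fun y : ℝ => φ (t, a t * y) + a t * y * P2 φ (t, a t * y) := by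
        fun_prop
      calc ∫ y in (0:ℝ)..(1:ℝ), DD φ a b a' b' t y
          = ∫ y in (0:ℝ)..(1:ℝ), ((b t * P1 φ (t, b t * y) - a t * P1 φ (t, a t * y))
              + b' t * (φ (t, b t * y) + b t * y * P2 φ (t, b t * y))
              - a' t * (φ (t, a t * y) + a t * y * P2 φ (t, a t * y))) := by
            simp only [hDD]
        _ = ((∫ y in (0:ℝ)..(1:ℝ), (b t * P1 φ (t, b t * y) - a t * P1 φ (t, a t * y)))
              + ∫ y in (0:ℝ)..(1:ℝ), b' t * (φ (t, b t * y) + b t * y * P2 φ (t, b t * y)))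
              - ∫ y in (0:ℝ)..(1:ℝ), a' t * (φ (t, a t * y) + a t * y * P2 φ (t, a t * y)) := by
            rw [intervalIntegral.integral_sub, intervalIntegral.integral_add]
            · exact hc1.intervalIntegrable _ _
            · exact (continuous_const.mul hc2).intervalIntegrable _ _
            · exact (hc1.add (continuous_const.mul hc2)).intervalIntegrable _ _
            · exact (continuous_const.mul hc3).intervalIntegrable _ _
        _ = I t := by
            have e1 : ∫ y in (0:ℝ)..(1:ℝ), (b t * P1 φ (t, b t * y) - a t * P1 φ (t, a t * y))
                = (∫ x in (0:ℝ)..(b t), P1 φ (t, x)) - ∫ x in (0:ℝ)..(a t), P1 φ (t, x) := by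
              have i1 : IntervalIntegrable (fun y => b t * P1 φ (t, b t * y)) volume 0 1 :=
                Continuous.intervalIntegrable (by fun_prop) _ _
              have i2 : IntervalIntegrable (fun y => a t * P1 φ (t, a t * y)) volume 0 1 :=
                Continuous.intervalIntegrable (by fun_prop) _ _
              rw [subst_integral (g := fun x => P1 φ (t, x)) (by fun_prop) (b t),
                subst_integral (g := fun x => P1 φ (t, x)) (by fun_prop) (a t),
                ← intervalIntegral.integral_sub i1 i2]
            have e2 : ∀ c : ℝ, ∫ y in (0:ℝ)..(1:ℝ), (φ (t, c * y) + c * y * P2 φ (t, c * y))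
                = φ (t, c) := by
              intro c
              have hde : ∀ y ∈ uIcc (0:ℝ) (1:ℝ), HasDerivAt (fun y => y * φ (t, c * y))
                  (φ (t, c * y) + c * y * P2 φ (t, c * y)) y := by
                intro y _
                have hin : HasDerivAt (fun y : ℝ => φ (t, c * y))
                    (0 * P1 φ (t, c * y) + (c * 1) * P2 φ (t, c * y)) y :=
                  hasDerivAt_comp_phi hφ (hasDerivAt_const y t)
                    ((hasDerivAt_id y).const_mul c)
                have := (hasDerivAt_id y).mul hin
                refine this.congr_deriv ?_
                simp only [id_eq]
                ring
              have := intervalIntegral.integral_eq_sub_of_hasDerivAt hde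
                (Continuous.intervalIntegrable (by fun_prop) _ _)
              simpa using this
            rw [e1, intervalIntegral.integral_const_mul, intervalIntegral.integral_const_mul,
              e2, e2, hI, hra, hrb]
            ring
    rw [← hval]
    exact h
  -- continuity of I
  have hIcont : Continuous I := by
    have hc1 : Continuous fun t => ∫ x in (0:ℝ)..(b t), P1 φ (t, x) :=
      intervalIntegral.continuous_parametric_intervalIntegral_of_continuous
        (f := fun t x => P1 φ (t, x)) (by fun_prop) hbc
    have hc2 : Continuous fun t => ∫ x in (0:ℝ)..(a t), P1 φ (t, x) :=
      intervalIntegral.continuous_parametric_intervalIntegral_of_continuous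
        (f := fun t x => P1 φ (t, x)) (by fun_prop) hac
    rw [hI]
    fun_prop
  -- final computation
  have hmain : ∫ t in Ioc (0:ℝ) T, I t = F T - F 0 := by
    rw [← intervalIntegral.integral_of_le hT.le]
    exact intervalIntegral.integral_eq_sub_of_hasDeriv_right_of_le hT.le hFcont.continuousOn
      (fun t htt => (hFderiv t htt).hasDerivWithinAt) (hIcont.intervalIntegrable 0 T)
  have hFT : F T = 0 := by
    rw [hFval T]
    simp [hφT]
  have hF0 : F 0 = ∫ x in (0:ℝ)..(1:ℝ), φ (0, x) := by
    rw [hFval 0, ha0, hb0]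
  have hinit : (∫ x : ℝ, (Icc (0:ℝ) 1).indicator (fun _ => (1:ℝ)) x * φ (0, x)) = F 0 := by
    have hpt : (fun x => (Icc (0:ℝ) 1).indicator (fun _ => (1:ℝ)) x * φ (0, x))
        = (Icc (0:ℝ) 1).indicator (fun x => φ (0, x)) := by
      funext x
      rw [Set.indicator_apply, Set.indicator_apply]
      split <;> simp
    rw [hpt, integral_indicator measurableSet_Icc, integral_Icc_eq_integral_Ioc,
      ← intervalIntegral.integral_of_le zero_le_one, hF0]
  beta_reduce
  rw [setIntegral_congr_fun measurableSet_Ioc (fun t ht => hstep2 t ⟨ht.1.le, ht.2⟩),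
    hmain, hinit, hFT]
  ring

lemma meas_ind (a b : ℝ → ℝ) (hac : Continuous a) (hbc : Continuous b) :
    Measurable (Function.uncurry fun t x => if x ∈ Icc (a t) (b t) then (1:ℝ) else 0) := by
  have hS : MeasurableSet {p : ℝ × ℝ | a p.1 ≤ p.2 ∧ p.2 ≤ b p.1} :=
    (measurableSet_le (hac.comp continuous_fst).measurable measurable_snd).inter
      (measurableSet_le measurable_snd (hbc.comp continuous_fst).measurable)
  exact Measurable.ite hS measurable_const measurable_const

theorem nonuniqueness_of_weak_solutions (T K : ℝ) (hT : 0 < T) (hK : T / 2 + 1 < K) :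
    ∃ u1 u2 : ℝ → ℝ → ℝ,
      Measurable (Function.uncurry u1) ∧ Measurable (Function.uncurry u2) ∧
      (∃ M : ℝ, ∀ t x, |u1 t x| ≤ M ∧ |u2 t x| ≤ M) ∧
      IsWeakSolutionModel T K u1 ∧ IsWeakSolutionModel T K u2 ∧
      0 < volume {p : ℝ × ℝ | p.1 ∈ Ioo 0 T ∧ u1 p.1 p.2 ≠ u2 p.1 p.2} := by
  have hK0 : (0:ℝ) ≤ K := by linarith
  have hbderiv : ∀ t : ℝ, HasDerivAt (fun t : ℝ => (t/2+1)^2) (t/2+1) t := by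
    intro t
    have h : HasDerivAt (fun t : ℝ => t/2+1) (1/2) t := by
      simpa using ((hasDerivAt_id t).div_const 2).add_const 1
    have := h.pow 2
    refine this.congr_deriv ?_
    ring
  have haderiv : ∀ t : ℝ, HasDerivAt (fun t : ℝ => -(t/2)^2) (-(t/2)) t := by
    intro t
    have h : HasDerivAt (fun t : ℝ => t/2) (1/2) t := (hasDerivAt_id t).div_const 2
    have := (h.pow 2).neg
    refine this.congr_deriv ?_
    ring
  refine ⟨fun t x => if x ∈ Icc (0:ℝ) ((t/2+1)^2) then 1 else 0,
          fun t x => if x ∈ Icc (-(t/2)^2) ((t/2+1)^2) then 1 else 0,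
          ?_, ?_, ?_, ?_, ?_, ?_⟩
  · exact meas_ind (fun _ => 0) (fun t => (t/2+1)^2) continuous_const (by fun_prop)
  · exact meas_ind (fun t => -(t/2)^2) (fun t => (t/2+1)^2) (by fun_prop) (by fun_prop)
  · refine ⟨1, fun t x => ⟨?_, ?_⟩⟩
    · show |if x ∈ Icc (0:ℝ) ((t/2+1)^2) then (1:ℝ) else 0| ≤ 1
      split_ifs <;> norm_num
    · show |if x ∈ Icc (-(t/2)^2) ((t/2+1)^2) then (1:ℝ) else 0| ≤ 1
      split_ifs <;> norm_num
  · exact isWeakSol_indicator T K hT hK0 (fun _ => 0) (fun t => (t/2+1)^2)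
      (fun _ => 0) (fun t => t/2+1) (fun t => hasDerivAt_const t 0) hbderiv
      continuous_const (by fun_prop) rfl (by norm_num)
      (fun t ht => by
        refine ⟨by simp, ?_, le_refl 0, by positivity, by simp [hK0], ?_⟩
        · rw [Real.sqrt_sq (by linarith [ht.1] : (0:ℝ) ≤ t/2+1)]
        · have h1 : t/2+1 ≤ K := by linarith [ht.2]
          exact pow_le_pow_left₀ (by linarith [ht.1]) h1 2)
  · exact isWeakSol_indicator T K hT hK0 (fun t => -(t/2)^2) (fun t => (t/2+1)^2)
      (fun t => -(t/2)) (fun t => t/2+1) haderiv hbderiv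
      (by fun_prop) (by fun_prop) (by norm_num) (by norm_num)
      (fun t ht => by
        refine ⟨?_, ?_, neg_nonpos.mpr (sq_nonneg _), by positivity, ?_, ?_⟩
        · rw [neg_neg, Real.sqrt_sq (by linarith [ht.1] : (0:ℝ) ≤ t/2)]
        · rw [Real.sqrt_sq (by linarith [ht.1] : (0:ℝ) ≤ t/2+1)]
        · rw [neg_neg]
          have h1 : t/2 ≤ K := by linarith [ht.2]
          exact pow_le_pow_left₀ (by linarith [ht.1]) h1 2
        · have h1 : t/2+1 ≤ K := by linarith [ht.2]
          exact pow_le_pow_left₀ (by linarith [ht.1]) h1 2)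
  · show 0 < volume {p : ℝ × ℝ | p.1 ∈ Ioo 0 T ∧
      (if p.2 ∈ Icc (0:ℝ) ((p.1/2+1)^2) then (1:ℝ) else 0)
        ≠ (if p.2 ∈ Icc (-(p.1/2)^2) ((p.1/2+1)^2) then (1:ℝ) else 0)}
    have hsub : Ioo (T/2) T ×ˢ Ioo (-(T/4)^2) (0:ℝ) ⊆ {p : ℝ × ℝ | p.1 ∈ Ioo 0 T ∧
        (if p.2 ∈ Icc (0:ℝ) ((p.1/2+1)^2) then (1:ℝ) else 0)
          ≠ (if p.2 ∈ Icc (-(p.1/2)^2) ((p.1/2+1)^2) then (1:ℝ) else 0)} := by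
      rintro ⟨t, x⟩ ⟨ht, hx⟩
      simp only [mem_Ioo] at ht hx
      have ht0 : 0 < t := lt_trans (by linarith) ht.1
      have hx0 : x < 0 := hx.2
      have h1 : ¬ (x ∈ Icc (0:ℝ) ((t/2+1)^2)) := by
        rw [mem_Icc]; push_neg; intro h; linarith
      have hsq : (T/4)^2 ≤ (t/2)^2 := by nlinarith [ht.1, hT]
      have h2 : x ∈ Icc (-(t/2)^2) ((t/2+1)^2) := by
        constructor
        · linarith [hx.1]
        · nlinarith
      constructor
      · exact ⟨ht0, ht.2⟩
      · show (if x ∈ Icc (0:ℝ) ((t/2+1)^2) then (1:ℝ) else 0)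
          ≠ (if x ∈ Icc (-(t/2)^2) ((t/2+1)^2) then (1:ℝ) else 0)
        rw [if_neg h1, if_pos h2]; norm_num
    have hvol : 0 < volume (Ioo (T/2) T ×ˢ Ioo (-(T/4)^2) (0:ℝ)) := by
      rw [show (volume : Measure (ℝ × ℝ)) = (volume : Measure ℝ).prod volume from rfl,
        Measure.prod_prod, Real.volume_Ioo, Real.volume_Ioo]
      apply ENNReal.mul_pos
      · simp only [ne_eq, ENNReal.ofReal_eq_zero, not_le]; linarith
      · simp only [ne_eq, ENNReal.ofReal_eq_zero, not_le]; nlinarith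
    exact lt_of_lt_of_le hvol (measure_mono hsub)
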